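/- Assume L = 1 and write f_λ = η_λ − θ. Then there exists C > 0 such that for all sufficiently large λ: (i) λt − Ct/λ ≤ ρ_λ(t) ≤ λt for all t ∈ [0,1]; and (ii) (coth ρ_λ(t) − 1) · |f_λ(t)| ≤ C e^{−λt} for all t ∈ (0,1]. In particular λ − C/λ ≤ ρ_λ(1) ≤ λ, so the length of the path can be recovered as lim_{λ→∞} ρ_λ(1)/λ. -/

import Mathlib

/-!
Write `f = η - θ` and let `M` bound `‖θ'‖`. Along the development, `‖f‖²` has derivative
`-2 lam coth ρ (1 - ⟪θ, η⟫²) - 2 ⟪θ', f⟫`: a contraction of order `lam ‖f‖²` against a drift of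
order `M ‖f‖`. Barrier arguments give `‖f‖ ≤ 2M / lam` and `‖f‖ ≤ 2Mt`. Since
`ρ' = lam ⟪θ, η⟫ = lam (1 - ‖f‖² / 2)`, the first bound yields `lam t - 2M²t / lam ≤ ρ ≤ lam t`;
then `coth ρ - 1 ≤ (2 + 1/ρ) e^{-2ρ}` with `2ρ ≥ lam t`, together with both bounds on `‖f‖`,
gives `(coth ρ - 1) ‖f‖ ≤ 4 e^{-lam t}`.
-/

open Real Set Filter Topology
open scoped RealInnerProductSpace

section Comparison

variable {f f' B B' : ℝ → ℝ} {a b : ℝ}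

theorem image_le_of_hasDerivAt_le_boundary (hf : ContinuousOn f (Icc a b))
    (hf' : ∀ x ∈ Ioo a b, HasDerivAt f (f' x) x) (hB : ContinuousOn B (Icc a b))
    (hB' : ∀ x ∈ Ioo a b, HasDerivAt B (B' x) x) (ha : f a ≤ B a)
    (bound : ∀ x ∈ Ioo a b, f' x ≤ B' x) : ∀ ⦃x⦄, x ∈ Icc a b → f x ≤ B x := by
  have hmono : MonotoneOn (B - f) (Icc a b) := by
    refine monotoneOn_of_hasDerivWithinAt_nonneg (f' := B' - f') (convex_Icc a b) (hB.sub hf)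
      ?_ ?_ <;> rw [interior_Icc]
    · exact fun x hx => ((hB' x hx).sub (hf' x hx)).hasDerivWithinAt
    · exact fun x hx => sub_nonneg.2 (bound x hx)
  intro x hx
  have := hmono (left_mem_Icc.2 (hx.1.trans hx.2)) hx hx.1
  simp only [Pi.sub_apply] at this
  linarith

/-- Unlike `image_le_of_deriv_right_lt_deriv_boundary'`, no derivative is required at `a`:
the strict inequality at `a` lets us start the comparison slightly to the right of it. -/
theorem image_le_of_hasDerivAt_lt_boundary (hf : ContinuousOn f (Icc a b))
    (hf' : ∀ x ∈ Ioo a b, HasDerivAt f (f' x) x) (hB : ContinuousOn B (Icc a b))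
    (hB' : ∀ x ∈ Ioo a b, HasDerivAt B (B' x) x) (ha : f a < B a)
    (bound : ∀ x ∈ Ioo a b, f x = B x → f' x < B' x) : ∀ ⦃x⦄, x ∈ Icc a b → f x ≤ B x := by
  intro x hx
  rcases hx.1.eq_or_lt with rfl | hax
  · exact ha.le
  have hsub : Ioo a x ⊆ Icc a b := fun y hy => ⟨hy.1.le, hy.2.le.trans hx.2⟩
  have hnear : ∀ᶠ y in 𝓝[Ioo a x] a, f y < B y :=
    Tendsto.eventually_lt ((hf a (left_mem_Icc.2 (hx.1.trans hx.2))).mono hsub)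
      ((hB a (left_mem_Icc.2 (hx.1.trans hx.2))).mono hsub) ha
  have := left_nhdsWithin_Ioo_neBot hax
  obtain ⟨δ, hδB, hδ⟩ := (hnear.and self_mem_nhdsWithin).exists
  have hIoo : Ico δ x ⊆ Ioo a b := fun y hy => ⟨hδ.1.trans_le hy.1, hy.2.trans_le hx.2⟩
  have hIcc : Icc δ x ⊆ Icc a b := Icc_subset_Icc hδ.1.le hx.2
  exact image_le_of_deriv_right_lt_deriv_boundary' (hf.mono hIcc)
    (fun y hy => (hf' y (hIoo hy)).hasDerivWithinAt) hδB.le (hB.mono hIcc)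
    (fun y hy => (hB' y (hIoo hy)).hasDerivWithinAt) (fun y hy => bound y (hIoo hy))
    (right_mem_Icc.2 hδ.2.le)

end Comparison

theorem one_le_cosh_div_sinh {r : ℝ} (hr : 0 < r) : 1 ≤ cosh r / sinh r := by
  rw [one_le_div (sinh_pos_iff.2 hr)]
  exact (sinh_lt_cosh r).le

theorem cosh_div_sinh_sub_one_le {r : ℝ} (hr : 0 < r) :
    cosh r / sinh r - 1 ≤ (2 + 1 / r) * exp (-(2 * r)) := by
  have hs : 0 < sinh r := sinh_pos_iff.2 hr
  set e := exp (-r)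
  have he : 0 < e := exp_pos _
  have hes : e * sinh r = (1 - e ^ 2) / 2 := by
    have : e * exp r = 1 := by rw [← exp_add]; simp
    rw [sinh_eq]; linear_combination this / 2
  have hgrowth : (2 * r + 1) * e ^ 2 ≤ 1 := by
    have : e ^ 2 * exp (2 * r) = 1 := by rw [← exp_nat_mul, ← exp_add]; ring_nf; simp
    nlinarith [add_one_le_exp (2 * r)]
  rw [div_sub_one hs.ne', cosh_sub_sinh, show exp (-(2 * r)) = e ^ 2 by
    rw [← exp_nat_mul]; ring_nf, div_le_iff₀ hs]
  have key : 2 * r ≤ (2 * r + 1) * (1 - e ^ 2) := by linarith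
  calc e ≤ e * ((2 * r + 1) * (1 - e ^ 2) / (2 * r)) :=
        le_mul_of_one_le_right he.le ((one_le_div (by positivity)).2 key)
    _ = (2 + 1 / r) * e ^ 2 * sinh r := by
        rw [mul_assoc, pow_two, mul_assoc, hes]; field_simp

section UnitVectors

variable {F : Type*} [NormedAddCommGroup F] [InnerProductSpace ℝ F] {x y : F}

theorem inner_eq_one_sub_norm_sub_sq_div_two (hx : ‖x‖ = 1) (hy : ‖y‖ = 1) :
    ⟪x, y⟫ = 1 - ‖y - x‖ ^ 2 / 2 := by
  rw [norm_sub_sq_real, hx, hy, real_inner_comm]; ring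

theorem inner_sq_le_one (hx : ‖x‖ = 1) (hy : ‖y‖ = 1) : ⟪x, y⟫ ^ 2 ≤ 1 := by
  rw [sq_le_one_iff_abs_le_one]
  simpa [hx, hy] using abs_real_inner_le_norm x y

theorem inner_sub_inner_smul_sub (hx : ‖x‖ = 1) (hy : ‖y‖ = 1) :
    ⟪x - ⟪x, y⟫ • y, y - x⟫ = -(1 - ⟪x, y⟫ ^ 2) := by
  have hxx : ⟪x, x⟫ = 1 := by rw [real_inner_self_eq_norm_sq, hx]; norm_num
  have hyy : ⟪y, y⟫ = 1 := by rw [real_inner_self_eq_norm_sq, hy]; norm_num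
  simp only [inner_sub_left, inner_sub_right, real_inner_smul_left, hxx, hyy,
    real_inner_comm x y]
  ring

theorem neg_inner_le_mul_norm {v u : F} {M : ℝ} (hv : ‖v‖ ≤ M) : -⟪v, u⟫ ≤ M * ‖u‖ :=
  ((neg_le_abs _).trans (abs_real_inner_le_norm v u)).trans
    (mul_le_mul_of_nonneg_right hv (norm_nonneg u))

theorem neg_mul_one_sub_inner_sq_sub_inner_le {v : F} {k M : ℝ} (hx : ‖x‖ = 1) (hy : ‖y‖ = 1)
    (hk : 0 ≤ k) (hv : ‖v‖ ≤ M) :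
    -(2 * k * (1 - ⟪x, y⟫ ^ 2)) - 2 * ⟪v, y - x⟫ ≤ 2 * M * ‖y - x‖ := by
  have hq : 0 ≤ k * (1 - ⟪x, y⟫ ^ 2) := mul_nonneg hk (sub_nonneg.2 (inner_sq_le_one hx hy))
  linarith [neg_inner_le_mul_norm (u := y - x) hv]

/-- Uses `1 - ⟪x, y⟫² ≥ 3/4 ‖y - x‖²`, valid once `‖y - x‖ ≤ 1`. -/
theorem neg_mul_one_sub_inner_sq_sub_inner_le_of_norm_sub_sq_le_one {v : F} {k m M : ℝ}
    (hx : ‖x‖ = 1) (hy : ‖y‖ = 1) (hm : 0 ≤ m) (hmk : m ≤ k) (hv : ‖v‖ ≤ M)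
    (h : ‖y - x‖ ^ 2 ≤ 1) :
    -(2 * k * (1 - ⟪x, y⟫ ^ 2)) - 2 * ⟪v, y - x⟫ ≤
      -(3 / 2 * m * ‖y - x‖ ^ 2) + 2 * M * ‖y - x‖ := by
  have hq : 3 / 4 * ‖y - x‖ ^ 2 ≤ 1 - ⟪x, y⟫ ^ 2 := by
    rw [inner_eq_one_sub_norm_sub_sq_div_two hx hy]
    nlinarith [sq_nonneg ‖y - x‖]
  have hcontr : m * (3 / 4 * ‖y - x‖ ^ 2) ≤ k * (1 - ⟪x, y⟫ ^ 2) :=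
    mul_le_mul hmk hq (by positivity) (hm.trans hmk)
  linarith [neg_inner_le_mul_norm (u := y - x) hv]

end UnitVectors

theorem tendsto_div_self_of_sub_div_le {u : ℝ → ℝ} {C : ℝ}
    (h : ∀ᶠ x in atTop, x - C / x ≤ u x ∧ u x ≤ x) : Tendsto (fun x => u x / x) atTop (𝓝 1) := by
  have hlow : Tendsto (fun x : ℝ => 1 - C * x⁻¹ ^ 2) atTop (𝓝 1) := by
    simpa using ((tendsto_inv_atTop_zero.pow 2).const_mul C).const_sub (1 : ℝ)
  refine tendsto_of_tendsto_of_tendsto_of_le_of_le' hlow tendsto_const_nhds ?_ ?_ <;>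
    filter_upwards [h, eventually_gt_atTop 0] with x hx hx0
  · rw [le_div_iff₀ hx0]
    calc (1 - C * x⁻¹ ^ 2) * x = x - C / x := by field_simp
      _ ≤ u x := hx.1
  · exact (div_le_one hx0).2 hx.2

/-- The hyperbolic development of `lam • γ` on `[0, 1]`, where `γ' = θ`, in polar coordinates
around its starting point: at time `t` it lies at distance `ρ t` in the direction `η t`. -/
structure IsHyperbolicDevelopment {F : Type*} [NormedAddCommGroup F] [InnerProductSpace ℝ F]
    (θ : ℝ → F) (lam : ℝ) (η : ℝ → F) (ρ : ℝ → ℝ) : Prop where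
  continuousOn_dir : ContinuousOn η (Icc 0 1)
  continuousOn_radius : ContinuousOn ρ (Icc 0 1)
  norm_dir : ∀ t ∈ Icc (0 : ℝ) 1, ‖η t‖ = 1
  dir_zero : η 0 = θ 0
  radius_zero : ρ 0 = 0
  radius_pos : ∀ t ∈ Ioc (0 : ℝ) 1, 0 < ρ t
  hasDerivAt_dir : ∀ t ∈ Ioc (0 : ℝ) 1,
    HasDerivAt η ((lam * (cosh (ρ t) / sinh (ρ t))) • (θ t - ⟪θ t, η t⟫ • η t)) t
  hasDerivAt_radius : ∀ t ∈ Ioc (0 : ℝ) 1, HasDerivAt ρ (lam * ⟪θ t, η t⟫) t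

namespace IsHyperbolicDevelopment

variable {F : Type*} [NormedAddCommGroup F] [InnerProductSpace ℝ F]
  {θ θ' η : ℝ → F} {ρ : ℝ → ℝ} {lam M : ℝ}

theorem radius_le (D : IsHyperbolicDevelopment θ lam η ρ)
    (hθ : ∀ t ∈ Icc (0 : ℝ) 1, ‖θ t‖ = 1) (hlam : 0 ≤ lam) :
    ∀ t ∈ Icc (0 : ℝ) 1, ρ t ≤ lam * t := by
  refine image_le_of_hasDerivAt_le_boundary D.continuousOn_radius
    (fun t ht => D.hasDerivAt_radius t (Ioo_subset_Ioc_self ht)) (by fun_prop)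
    (fun t _ => (hasDerivAt_id' t).const_mul lam) (by simp [D.radius_zero]) fun t ht => ?_
  have := real_inner_le_norm (θ t) (η t)
  rw [hθ t (Ioo_subset_Icc_self ht), D.norm_dir t (Ioo_subset_Icc_self ht), one_mul] at this
  exact mul_le_mul_of_nonneg_left this hlam

theorem hasDerivAt_norm_sub_sq (D : IsHyperbolicDevelopment θ lam η ρ)
    (hθ : ∀ t ∈ Icc (0 : ℝ) 1, ‖θ t‖ = 1) (hθ' : ∀ t ∈ Icc (0 : ℝ) 1, HasDerivAt θ (θ' t) t) :
    ∀ t ∈ Ioc (0 : ℝ) 1, HasDerivAt (fun s => ‖η s - θ s‖ ^ 2)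
      (-(2 * (lam * (cosh (ρ t) / sinh (ρ t))) * (1 - ⟪θ t, η t⟫ ^ 2)) -
        2 * ⟪θ' t, η t - θ t⟫) t := by
  intro t ht
  have htI := Ioc_subset_Icc_self ht
  refine ((D.hasDerivAt_dir t ht).sub (hθ' t htI)).norm_sq.congr_deriv ?_
  rw [Pi.sub_apply, inner_sub_right, real_inner_smul_right, real_inner_comm (θ t - _),
    inner_sub_inner_smul_sub (hθ t htI) (D.norm_dir t htI), real_inner_comm (θ' t)]
  ring

theorem norm_sub_le (D : IsHyperbolicDevelopment θ lam η ρ)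
    (hθ : ∀ t ∈ Icc (0 : ℝ) 1, ‖θ t‖ = 1) (hθ' : ∀ t ∈ Icc (0 : ℝ) 1, HasDerivAt θ (θ' t) t)
    (hM : 0 < M) (hθ'M : ∀ t ∈ Icc (0 : ℝ) 1, ‖θ' t‖ ≤ M) (hlam : 2 * M ≤ lam) :
    ∀ t ∈ Icc (0 : ℝ) 1, ‖η t - θ t‖ ≤ 2 * M / lam := by
  have hlam0 : 0 < lam := by linarith
  have hb : 0 < 2 * M / lam := by positivity
  have hθc : ContinuousOn θ (Icc 0 1) := fun t ht => (hθ' t ht).continuousAt.continuousWithinAt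
  intro t ht
  refine (pow_le_pow_iff_left₀ (norm_nonneg _) hb.le two_ne_zero).1 ?_
  refine image_le_of_hasDerivAt_lt_boundary (f := fun s => ‖η s - θ s‖ ^ 2) (B' := fun _ => 0)
    ((D.continuousOn_dir.sub hθc).norm.pow 2)
    (fun s hs => D.hasDerivAt_norm_sub_sq hθ hθ' s (Ioo_subset_Ioc_self hs)) continuousOn_const
    (fun s _ => hasDerivAt_const s _) (by simp [D.dir_zero, hb]) (fun s hs hcross => ?_) ht
  have hsI := Ioo_subset_Icc_self hs
  set r := ‖η s - θ s‖
  have hr : r = 2 * M / lam :=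
    (pow_left_inj₀ (norm_nonneg _) hb.le two_ne_zero).1 hcross
  have hr0 : 0 < r := hr ▸ hb
  have hlam_r : lam * r = 2 * M := by rw [hr]; field_simp
  have hr1 : r ^ 2 ≤ 1 := by rw [hr, div_pow, div_le_one (by positivity)]; nlinarith
  have hc := one_le_cosh_div_sinh (D.radius_pos s (Ioo_subset_Ioc_self hs))
  -- the drift `2 M r` is beaten by the contraction `3/2 lam r² = 3 M r`
  calc _ ≤ -(3 / 2 * lam * r ^ 2) + 2 * M * r :=
        neg_mul_one_sub_inner_sq_sub_inner_le_of_norm_sub_sq_le_one (hθ s hsI) (D.norm_dir s hsI)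
          hlam0.le (le_mul_of_one_le_right hlam0.le hc) (hθ'M s hsI) hr1
    _ = -(M * r) := by linear_combination (-(3 / 2) * r) * hlam_r
    _ < 0 := by simp only [neg_lt_zero]; positivity

theorem norm_sub_le_mul (D : IsHyperbolicDevelopment θ lam η ρ)
    (hθ : ∀ t ∈ Icc (0 : ℝ) 1, ‖θ t‖ = 1) (hθ' : ∀ t ∈ Icc (0 : ℝ) 1, HasDerivAt θ (θ' t) t)
    (hM : 0 < M) (hθ'M : ∀ t ∈ Icc (0 : ℝ) 1, ‖θ' t‖ ≤ M) (hlam : 0 ≤ lam) :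
    ∀ t ∈ Icc (0 : ℝ) 1, ‖η t - θ t‖ ≤ 2 * M * t := by
  have hθc : ContinuousOn θ (Icc 0 1) := fun t ht => (hθ' t ht).continuousAt.continuousWithinAt
  intro t ht
  refine le_of_forall_pos_le_add fun ε hε => ?_
  refine (pow_le_pow_iff_left₀ (norm_nonneg _) (by have := ht.1; positivity) two_ne_zero).1 ?_
  refine image_le_of_hasDerivAt_lt_boundary (f := fun s => ‖η s - θ s‖ ^ 2)
    (B := fun s => (2 * M * s + ε) ^ 2) ((D.continuousOn_dir.sub hθc).norm.pow 2)
    (fun s hs => D.hasDerivAt_norm_sub_sq hθ hθ' s (Ioo_subset_Ioc_self hs)) (by fun_prop)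
    (fun s _ => (((hasDerivAt_id' s).const_mul (2 * M)).add_const ε).pow 2)
    (by simp [D.dir_zero, hε]) (fun s hs hcross => ?_) ht
  have hsI := Ioo_subset_Icc_self hs
  have hb : 0 < 2 * M * s + ε := by have := hs.1; positivity
  have hr : ‖η s - θ s‖ = 2 * M * s + ε :=
    (pow_left_inj₀ (norm_nonneg _) hb.le two_ne_zero).1 hcross
  have hc := (one_le_cosh_div_sinh (D.radius_pos s (Ioo_subset_Ioc_self hs))).trans' zero_le_one
  calc _ ≤ 2 * M * ‖η s - θ s‖ :=
        neg_mul_one_sub_inner_sq_sub_inner_le (hθ s hsI) (D.norm_dir s hsI)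
          (mul_nonneg hlam hc) (hθ'M s hsI)
    _ < _ := by rw [hr]; norm_num; nlinarith [mul_pos hM hb]

theorem mul_sub_le_radius (D : IsHyperbolicDevelopment θ lam η ρ)
    (hθ : ∀ t ∈ Icc (0 : ℝ) 1, ‖θ t‖ = 1) (hθ' : ∀ t ∈ Icc (0 : ℝ) 1, HasDerivAt θ (θ' t) t)
    (hM : 0 < M) (hθ'M : ∀ t ∈ Icc (0 : ℝ) 1, ‖θ' t‖ ≤ M) (hlam : 2 * M ≤ lam) :
    ∀ t ∈ Icc (0 : ℝ) 1, lam * t - 2 * M ^ 2 * t / lam ≤ ρ t := by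
  have hlam0 : 0 < lam := by linarith
  intro t ht
  rw [show lam * t - 2 * M ^ 2 * t / lam = (lam - 2 * M ^ 2 / lam) * t by ring]
  refine image_le_of_hasDerivAt_le_boundary (by fun_prop)
    (fun s _ => (hasDerivAt_id' s).const_mul (lam - 2 * M ^ 2 / lam)) D.continuousOn_radius
    (fun s hs => D.hasDerivAt_radius s (Ioo_subset_Ioc_self hs)) (by simp [D.radius_zero])
    (fun s hs => ?_) ht
  have hsI := Ioo_subset_Icc_self hs
  have hf := (D.norm_sub_le hθ hθ' hM hθ'M hlam) s hsI
  rw [inner_eq_one_sub_norm_sub_sq_div_two (hθ s hsI) (D.norm_dir s hsI)]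
  have : ‖η s - θ s‖ ^ 2 ≤ (2 * M / lam) ^ 2 := pow_le_pow_left₀ (norm_nonneg _) hf 2
  calc (lam - 2 * M ^ 2 / lam) * 1 = lam * (1 - (2 * M / lam) ^ 2 / 2) := by field_simp
    _ ≤ _ := by gcongr

theorem cosh_div_sinh_sub_one_mul_norm_sub_le (D : IsHyperbolicDevelopment θ lam η ρ)
    (hθ : ∀ t ∈ Icc (0 : ℝ) 1, ‖θ t‖ = 1) (hθ' : ∀ t ∈ Icc (0 : ℝ) 1, HasDerivAt θ (θ' t) t)
    (hM : 0 < M) (hθ'M : ∀ t ∈ Icc (0 : ℝ) 1, ‖θ' t‖ ≤ M) (hlam : 2 * M ≤ lam) :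
    ∀ t ∈ Ioc (0 : ℝ) 1,
      (cosh (ρ t) / sinh (ρ t) - 1) * ‖η t - θ t‖ ≤ 4 * exp (-(lam * t)) := by
  have hlam0 : 0 < lam := by linarith
  intro t ht
  have htI := Ioc_subset_Icc_self ht
  have hρ := D.radius_pos t ht
  have hlamt : 0 < lam * t := mul_pos hlam0 ht.1
  have hhalf : lam * t ≤ 2 * ρ t := by
    have := D.mul_sub_le_radius hθ hθ' hM hθ'M hlam t htI
    have : 2 * M ^ 2 * t / lam ≤ lam * t / 2 := by
      have hsq : (2 * M) ^ 2 ≤ lam ^ 2 := pow_le_pow_left₀ (by positivity) hlam 2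
      rw [div_le_div_iff₀ hlam0 two_pos]; nlinarith [mul_le_mul_of_nonneg_right hsq ht.1.le]
    linarith
  have hf₁ := D.norm_sub_le hθ hθ' hM hθ'M hlam t htI
  have hf₂ := D.norm_sub_le_mul hθ hθ' hM hθ'M hlam0.le t htI
  have hcoeff : (2 + 1 / ρ t) * ‖η t - θ t‖ ≤ 4 := by
    have : 1 / ρ t ≤ 2 / (lam * t) := by rw [div_le_div_iff₀ hρ hlamt]; linarith
    calc (2 + 1 / ρ t) * ‖η t - θ t‖ ≤ 2 * (2 * M / lam) + 2 / (lam * t) * (2 * M * t) := by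
          rw [add_mul]; gcongr
      _ = 8 * M / lam := by field_simp [ht.1.ne']; ring
      _ ≤ 4 := by rw [div_le_iff₀ hlam0]; linarith
  calc (cosh (ρ t) / sinh (ρ t) - 1) * ‖η t - θ t‖
      ≤ (2 + 1 / ρ t) * exp (-(2 * ρ t)) * ‖η t - θ t‖ := by
        gcongr; exact cosh_div_sinh_sub_one_le hρ
    _ = (2 + 1 / ρ t) * ‖η t - θ t‖ * exp (-(2 * ρ t)) := by ring
    _ ≤ 4 * exp (-(lam * t)) := by gcongr

end IsHyperbolicDevelopment

theorem step3_length_and_exponential_bounds_general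
    {d : ℕ}
    (θ θ' : ℝ → EuclideanSpace ℝ (Fin d))
    (hθ1 : ∀ t ∈ Icc (0 : ℝ) 1, ‖θ t‖ = 1)
    (hθd : ∀ t ∈ Icc (0 : ℝ) 1, HasDerivAt θ (θ' t) t)
    (hθ'c : ContinuousOn θ' (Icc 0 1))
    (η : ℝ → ℝ → EuclideanSpace ℝ (Fin d)) (ρ : ℝ → ℝ → ℝ)
    (hηc : ∀ lam > (0 : ℝ), ContinuousOn (η lam) (Icc 0 1))
    (hρc : ∀ lam > (0 : ℝ), ContinuousOn (ρ lam) (Icc 0 1))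
    (hη1 : ∀ lam > (0 : ℝ), ∀ t ∈ Icc (0 : ℝ) 1, ‖η lam t‖ = 1)
    (hη0 : ∀ lam > (0 : ℝ), η lam 0 = θ 0)
    (hρ0 : ∀ lam > (0 : ℝ), ρ lam 0 = 0)
    (hρpos : ∀ lam > (0 : ℝ), ∀ t ∈ Ioc (0 : ℝ) 1, 0 < ρ lam t)
    (hODE : ∀ lam > (0 : ℝ), ∀ t ∈ Ioc (0 : ℝ) 1,
      HasDerivAt (η lam)
        ((lam * (Real.cosh (ρ lam t) / Real.sinh (ρ lam t))) •
          (θ t - (inner ℝ (θ t) (η lam t) : ℝ) • η lam t)) t ∧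
      HasDerivAt (ρ lam) (lam * (inner ℝ (θ t) (η lam t) : ℝ)) t) :
    (∃ C > (0 : ℝ), ∃ Λ > (0 : ℝ), ∀ lam ≥ Λ,
      (∀ t ∈ Icc (0 : ℝ) 1, lam * t - C * t / lam ≤ ρ lam t ∧ ρ lam t ≤ lam * t) ∧
      (∀ t ∈ Ioc (0 : ℝ) 1,
        (Real.cosh (ρ lam t) / Real.sinh (ρ lam t) - 1) * ‖η lam t - θ t‖ ≤
          C * Real.exp (-(lam * t))) ∧
      lam - C / lam ≤ ρ lam 1 ∧ ρ lam 1 ≤ lam) ∧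
    Tendsto (fun lam => ρ lam 1 / lam) atTop (nhds 1) := by
  obtain ⟨M₀, hM₀⟩ := isCompact_Icc.exists_bound_of_continuousOn hθ'c
  set M := max M₀ 1
  have hM : 0 < M := zero_lt_one.trans_le (le_max_right _ _)
  have hθ'M : ∀ t ∈ Icc (0 : ℝ) 1, ‖θ' t‖ ≤ M := fun t ht => (hM₀ t ht).trans (le_max_left _ _)
  have bounds : ∀ lam ≥ 2 * M,
      (∀ t ∈ Icc (0 : ℝ) 1, lam * t - (2 * M ^ 2 + 4) * t / lam ≤ ρ lam t ∧ ρ lam t ≤ lam * t) ∧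
      ∀ t ∈ Ioc (0 : ℝ) 1, (cosh (ρ lam t) / sinh (ρ lam t) - 1) * ‖η lam t - θ t‖ ≤
        (2 * M ^ 2 + 4) * exp (-(lam * t)) := by
    intro lam hlam
    have hlam0 : 0 < lam := by linarith
    have D : IsHyperbolicDevelopment θ lam (η lam) (ρ lam) :=
      ⟨hηc lam hlam0, hρc lam hlam0, hη1 lam hlam0, hη0 lam hlam0, hρ0 lam hlam0,
        hρpos lam hlam0, fun t ht => (hODE lam hlam0 t ht).1, fun t ht => (hODE lam hlam0 t ht).2⟩
    refine ⟨fun t ht => ⟨?_, D.radius_le hθ1 hlam0.le t ht⟩, fun t ht => ?_⟩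
    · have := D.mul_sub_le_radius hθ1 hθd hM hθ'M hlam t ht
      have : 2 * M ^ 2 * t / lam ≤ (2 * M ^ 2 + 4) * t / lam := by
        gcongr <;> linarith [ht.1]
      linarith
    · exact (D.cosh_div_sinh_sub_one_mul_norm_sub_le hθ1 hθd hM hθ'M hlam t ht).trans
        (mul_le_mul_of_nonneg_right (by nlinarith) (exp_pos _).le)
  have at_one : ∀ lam ≥ 2 * M, lam - (2 * M ^ 2 + 4) / lam ≤ ρ lam 1 ∧ ρ lam 1 ≤ lam :=
    fun lam hlam => by simpa using (bounds lam hlam).1 1 (right_mem_Icc.2 zero_le_one)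
  exact ⟨⟨2 * M ^ 2 + 4, by positivity, 2 * M, by positivity, fun lam hlam =>
    ⟨(bounds lam hlam).1, (bounds lam hlam).2, at_one lam hlam⟩⟩,
    tendsto_div_self_of_sub_div_le ((eventually_ge_atTop _).mono at_one)⟩

/-- Setting as in the hyperbolic-development theorems, with `L = 1`:
`θ : [0,1] → S^{d-1}` is C¹ with derivative `θ'`, and for each `lam > 0` the pair
`(η lam, ρ lam)` solves the development ODE system.  Writing `f_lam = η lam − θ`:
there exist `C > 0` and `Λ > 0` such that for all `lam ≥ Λ`,
(i) `lam·t − C·t/lam ≤ ρ_lam(t) ≤ lam·t` on `[0,1]`, and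
(ii) `(coth ρ_lam(t) − 1)·|f_lam(t)| ≤ C e^{−lam t}` on `(0,1]`.
In particular `lam − C/lam ≤ ρ_lam(1) ≤ lam`, so the length is recovered:
`ρ_lam(1)/lam → 1`. -/
theorem step3_length_and_exponential_bounds
    {d : ℕ} (hd : 0 < d)
    (θ θ' : ℝ → EuclideanSpace ℝ (Fin d))
    (hθ1 : ∀ t ∈ Icc (0 : ℝ) 1, ‖θ t‖ = 1)
    (hθd : ∀ t ∈ Icc (0 : ℝ) 1, HasDerivAt θ (θ' t) t)
    (hθ'c : ContinuousOn θ' (Icc 0 1))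
    (η : ℝ → ℝ → EuclideanSpace ℝ (Fin d)) (ρ : ℝ → ℝ → ℝ)
    (hηc : ∀ lam > (0 : ℝ), ContinuousOn (η lam) (Icc 0 1))
    (hρc : ∀ lam > (0 : ℝ), ContinuousOn (ρ lam) (Icc 0 1))
    (hη1 : ∀ lam > (0 : ℝ), ∀ t ∈ Icc (0 : ℝ) 1, ‖η lam t‖ = 1)
    (hη0 : ∀ lam > (0 : ℝ), η lam 0 = θ 0)
    (hρ0 : ∀ lam > (0 : ℝ), ρ lam 0 = 0)
    (hρpos : ∀ lam > (0 : ℝ), ∀ t ∈ Ioc (0 : ℝ) 1, 0 < ρ lam t)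
    (hODE : ∀ lam > (0 : ℝ), ∀ t ∈ Ioc (0 : ℝ) 1,
      HasDerivAt (η lam)
        ((lam * (Real.cosh (ρ lam t) / Real.sinh (ρ lam t))) •
          (θ t - (inner ℝ (θ t) (η lam t) : ℝ) • η lam t)) t ∧
      HasDerivAt (ρ lam) (lam * (inner ℝ (θ t) (η lam t) : ℝ)) t) :
    (∃ C > (0 : ℝ), ∃ Λ > (0 : ℝ), ∀ lam ≥ Λ,
      (∀ t ∈ Icc (0 : ℝ) 1, lam * t - C * t / lam ≤ ρ lam t ∧ ρ lam t ≤ lam * t) ∧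
      (∀ t ∈ Ioc (0 : ℝ) 1,
        (Real.cosh (ρ lam t) / Real.sinh (ρ lam t) - 1) * ‖η lam t - θ t‖ ≤
          C * Real.exp (-(lam * t))) ∧
      lam - C / lam ≤ ρ lam 1 ∧ ρ lam 1 ≤ lam) ∧
    Tendsto (fun lam => ρ lam 1 / lam) atTop (nhds 1) :=
  step3_length_and_exponential_bounds_general θ θ' hθ1 hθd hθ'c η ρ hηc hρc hη1 hη0 hρ0 hρpos hODE
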